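/- arXiv:2105.11724 — 4 statements merged into one kernel-verified Lean document; each statement's English description precedes it below -/
import Mathlib

section
/- Let p ≥ 2 and let v be a real-valued function on subsets of {1,…,p} with v(∅) = 0. For β ∈ ℝ^p define the weighted least-squares cost ℓ*(β) = Σ_{U : ∅ ≠ U ⊊ {1,…,p}} w(U) · (v(U) − Σ_{j∈U} β_j)². Then, over the constraint set {β ∈ ℝ^p : Σ_{j=1}^p β_j = v({1,…,p})}, the cost ℓ* admits a unique minimizer, and this minimizer is the vector of Shapley values (φ_1(v),…,φ_p(v)). -/
/-- The Shapley value of index `j` for a cooperative game `v` on subsets of `{1,…,p}`. -/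
noncomputable def shapleyValue {p : ℕ} (v : Finset (Fin p) → ℝ) (j : Fin p) : ℝ :=
  ∑ U ∈ (Finset.univ.erase j).powerset,
    (1 / p : ℝ) * ((p - 1).choose U.card : ℝ)⁻¹ * (v (insert j U) - v U)

/-- The Shapley kernel weight `w(U) = (p−1)/(C(p,|U|)·|U|·(p−|U|))`. -/
noncomputable def shapleyWeight (p : ℕ) (U : Finset (Fin p)) : ℝ :=
  ((p : ℝ) - 1) / ((p.choose U.card : ℝ) * (U.card : ℝ) * ((p : ℝ) - (U.card : ℝ)))

/-- The weighted least-squares cost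
`ℓ*(β) = Σ_{U : ∅ ≠ U ⊊ {1,…,p}} w(U) · (v(U) − Σ_{j∈U} β_j)²`. -/
noncomputable def shapleyLoss {p : ℕ} (v : Finset (Fin p) → ℝ) (β : Fin p → ℝ) : ℝ :=
  ∑ U ∈ Finset.univ.powerset.filter (fun U => U ≠ ∅ ∧ U ≠ Finset.univ),
    shapleyWeight p U * (v U - ∑ j ∈ U, β j) ^ 2

/-!
Write `φ` for the Shapley vector and `R_j(β) = Σ_{U ∋ j} w(U) (v(U) - Σ_{i ∈ U} β_i)`, so that
`ℓ*(φ + δ) = ℓ*(φ) - 2 Σ_j δ_j R_j(φ) + Q(δ)` with `Q(δ) = Σ_U w(U) (Σ_{i ∈ U} δ_i)² ≥ 0`.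
The point is that `R_j(φ)` does not depend on `j`. Pairing `S ∪ {j}` with `S ∪ {k}` for
`S ⊆ {1, …, p} ∖ {j, k}` turns `R_j(φ) - R_k(φ)` into
`Σ_S w(S ∪ {j}) (v(S ∪ {j}) - v(S ∪ {k})) - (φ_j - φ_k) Σ_S w(S ∪ {j})`, and
`w(S ∪ {j}) = (p - 1)/p · (c_{|S|} + c_{|S|+1})` for the Shapley coefficients
`c_s = 1 / (p · C(p - 1, s))`; the same pairing applied to the Shapley formula shows that both
terms equal `(p - 1)/p · (φ_j - φ_k)`. So the linear term vanishes on the hyperplane `Σ δ = 0`,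
which contains `β - φ` by efficiency, and `Q(δ) = 0` forces `δ = 0` because singletons have
positive weight.
-/

open Finset

section Combinatorics

variable {α : Type*} [Fintype α] [DecidableEq α]

theorem sum_filter_mem_eq_sum_powerset_erase {M : Type*} [AddCommMonoid M] (f : Finset α → M)
    (j : α) : ∑ U with j ∈ U, f U = ∑ T ∈ (univ.erase j).powerset, f (insert j T) := by
  have hj : j ∉ univ.erase j := notMem_erase j univ
  rw [sum_filter, ← powerset_univ, ← insert_erase (mem_univ j), sum_powerset_insert hj]
  have h₀ : ∀ T ∈ (univ.erase j).powerset, j ∉ T := fun T hT h => hj (mem_powerset.mp hT h)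
  simp +contextual [h₀]

theorem sum_powerset_erase_sub_sum_powerset_erase {M : Type*} [AddCommGroup M]
    (f : α → Finset α → M) {j k : α} (hjk : j ≠ k) :
    ∑ T ∈ (univ.erase j).powerset, f j T - ∑ T ∈ (univ.erase k).powerset, f k T =
      ∑ S ∈ ((univ.erase j).erase k).powerset,
        ((f j S - f k S) + (f j (insert k S) - f k (insert j S))) := by
  set E := (univ.erase j).erase k
  have hk : k ∉ E := notMem_erase k _
  have hj : j ∉ E := fun h => (mem_erase.mp (mem_of_mem_erase h)).1 rfl
  have ej : univ.erase j = insert k E :=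
    (insert_erase (mem_erase.mpr ⟨hjk.symm, mem_univ k⟩)).symm
  have ek : univ.erase k = insert j E := by
    rw [show E = (univ.erase k).erase j from erase_right_comm,
      insert_erase (mem_erase.mpr ⟨hjk, mem_univ j⟩)]
  rw [ej, ek, sum_powerset_insert hk, sum_powerset_insert hj, sum_add_distrib, sum_sub_distrib,
    sum_sub_distrib]
  abel

theorem mem_powerset_erase_erase {j k : α} {S : Finset α} :
    S ∈ ((univ.erase j).erase k).powerset ↔ j ∉ S ∧ k ∉ S := by
  simp [subset_erase]

end Combinatorics

noncomputable def shapleyCoeff (p k : ℕ) : ℝ := (1 / p : ℝ) * ((p - 1).choose k : ℝ)⁻¹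

theorem shapleyValue_eq_sum_shapleyCoeff {p : ℕ} (v : Finset (Fin p) → ℝ) (j : Fin p) :
    shapleyValue v j =
      ∑ T ∈ (univ.erase j).powerset, shapleyCoeff p T.card * (v (insert j T) - v T) := rfl

theorem choose_mul_shapleyCoeff {p k : ℕ} (hk : k < p) :
    ((p - 1).choose k : ℝ) * shapleyCoeff p k = 1 / p := by
  have : ((p - 1).choose k : ℝ) ≠ 0 := by exact_mod_cast (Nat.choose_pos (by omega)).ne'
  rw [shapleyCoeff]
  field_simp

theorem sum_powerset_shapleyCoeff {α : Type*} {p : ℕ} {s : Finset α} (hs : s.card + 1 = p) :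
    ∑ T ∈ s.powerset, shapleyCoeff p T.card = 1 := by
  have hp : (p : ℝ) ≠ 0 := by exact_mod_cast (by omega : p ≠ 0)
  have hterm : ∀ k ∈ range p, s.card.choose k • shapleyCoeff p k = 1 / p := fun k hk => by
    rw [nsmul_eq_mul, show s.card = p - 1 by omega, choose_mul_shapleyCoeff (mem_range.mp hk)]
  rw [sum_powerset_apply_card, hs, sum_congr rfl hterm, sum_const, card_range, nsmul_eq_mul,
    mul_one_div_cancel hp]

theorem add_one_mul_shapleyCoeff {p k : ℕ} (hk : k + 1 < p) :
    ((k : ℝ) + 1) * shapleyCoeff p k = ((p : ℝ) - (k + 1)) * shapleyCoeff p (k + 1) := by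
  obtain ⟨n, rfl⟩ : ∃ n, p = n + 1 := ⟨p - 1, by omega⟩
  have pascal : (n.choose (k + 1) : ℝ) * (k + 1) = n.choose k * ((n : ℝ) - k) := by
    rw [← Nat.cast_sub (by omega)]
    exact_mod_cast Nat.choose_succ_right_eq n k
  have h₀ : (n.choose k : ℝ) ≠ 0 := by exact_mod_cast (Nat.choose_pos (by omega)).ne'
  have h₁ : (n.choose (k + 1) : ℝ) ≠ 0 := by exact_mod_cast (Nat.choose_pos (by omega)).ne'
  simp only [shapleyCoeff, Nat.add_sub_cancel]
  push_cast
  field_simp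
  linear_combination pascal

theorem shapleyWeight_eq_shapleyCoeff {p k : ℕ} {U : Finset (Fin p)} (hU : U.card = k + 1)
    (hk : k + 1 < p) :
    shapleyWeight p U = ((p : ℝ) - 1) / p * (shapleyCoeff p k + shapleyCoeff p (k + 1)) := by
  obtain ⟨n, rfl⟩ : ∃ n, p = n + 1 := ⟨p - 1, by omega⟩
  have hA : (n.choose k : ℝ) ≠ 0 := by exact_mod_cast (Nat.choose_pos (by omega)).ne'
  have hnk : (n : ℝ) - k ≠ 0 := sub_ne_zero.mpr (by exact_mod_cast (by omega : n ≠ k))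
  have hB : (n.choose (k + 1) : ℝ) = n.choose k * ((n : ℝ) - k) / (k + 1) := by
    rw [eq_div_iff (by positivity), ← Nat.cast_sub (by omega)]
    exact_mod_cast Nat.choose_succ_right_eq n k
  have hC : ((n + 1).choose (k + 1) : ℝ) = (n + 1) * n.choose k / (k + 1) := by
    rw [eq_div_iff (by positivity)]
    exact_mod_cast (Nat.add_one_mul_choose_eq n k).symm
  simp only [shapleyWeight, shapleyCoeff, hU, Nat.add_sub_cancel]
  push_cast
  rw [hB, hC, show (n : ℝ) + 1 - (k + 1) = n - k by ring]
  field_simp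
  ring

-- The denominator of `shapleyWeight` vanishes at `∅` and `univ`, and `x / 0 = 0`.
theorem shapleyWeight_empty (p : ℕ) : shapleyWeight p ∅ = 0 := by
  simp [shapleyWeight]

theorem shapleyWeight_univ (p : ℕ) : shapleyWeight p univ = 0 := by
  simp [shapleyWeight]

theorem shapleyWeight_pos {p : ℕ} {U : Finset (Fin p)} (hU₀ : U.Nonempty) (hU : U ≠ univ) :
    0 < shapleyWeight p U := by
  have h₀ : 0 < U.card := hU₀.card_pos
  have h₁ : U.card < p := by simpa using card_lt_card (ssubset_univ_iff.mpr hU)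
  have : (0 : ℝ) < p.choose U.card := by exact_mod_cast Nat.choose_pos h₁.le
  have h₂ : (1 : ℝ) < p := by exact_mod_cast (by omega : 1 < p)
  have h₃ : (U.card : ℝ) < p := by exact_mod_cast h₁
  unfold shapleyWeight
  exact div_pos (by linarith) (mul_pos (mul_pos this (by exact_mod_cast h₀)) (by linarith))

theorem shapleyWeight_nonneg {p : ℕ} (U : Finset (Fin p)) : 0 ≤ shapleyWeight p U := by
  rcases U.eq_empty_or_nonempty with rfl | hU₀
  · rw [shapleyWeight_empty]
  by_cases hU : U = univ
  · rw [hU, shapleyWeight_univ]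
  · exact (shapleyWeight_pos hU₀ hU).le

theorem shapleyValue_sub_shapleyValue {p : ℕ} (v : Finset (Fin p) → ℝ) {j k : Fin p}
    (hjk : j ≠ k) :
    shapleyValue v j - shapleyValue v k =
      ∑ S ∈ ((univ.erase j).erase k).powerset,
        (shapleyCoeff p S.card + shapleyCoeff p (S.card + 1)) *
          (v (insert j S) - v (insert k S)) := by
  rw [shapleyValue_eq_sum_shapleyCoeff, shapleyValue_eq_sum_shapleyCoeff,
    sum_powerset_erase_sub_sum_powerset_erase
      (fun j T => shapleyCoeff p T.card * (v (insert j T) - v T)) hjk]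
  refine sum_congr rfl fun S hS => ?_
  obtain ⟨hjS, hkS⟩ := mem_powerset_erase_erase.mp hS
  rw [card_insert_of_notMem hjS, card_insert_of_notMem hkS, insert_comm]
  ring

theorem shapleyValue_eq_sum_ite {p : ℕ} (v : Finset (Fin p) → ℝ) (j : Fin p) :
    shapleyValue v j =
      ∑ U, (if j ∈ U then shapleyCoeff p (U.card - 1) else -shapleyCoeff p U.card) * v U := by
  have hmem : ∑ T ∈ (univ.erase j).powerset, shapleyCoeff p T.card * v (insert j T) =
      ∑ U with j ∈ U, shapleyCoeff p (U.card - 1) * v U := by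
    rw [sum_filter_mem_eq_sum_powerset_erase]
    refine sum_congr rfl fun T hT => ?_
    rw [card_insert_of_notMem fun h => notMem_erase j univ (mem_powerset.mp hT h)]
    rfl
  have hnot : (univ.erase j).powerset = ({U | j ∉ U} : Finset _) := by ext U; simp [subset_erase]
  rw [shapleyValue_eq_sum_shapleyCoeff]
  simp_rw [mul_sub, sum_sub_distrib]
  rw [hmem, hnot, sum_filter, sum_filter, ← sum_sub_distrib]
  refine sum_congr rfl fun U _ => ?_
  split_ifs <;> ring

theorem sum_ite_mem_shapleyCoeff {p : ℕ} (hp : p ≠ 0) (U : Finset (Fin p)) :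
    ∑ j, (if j ∈ U then shapleyCoeff p (U.card - 1) else -shapleyCoeff p U.card) =
      (if U = univ then 1 else 0) - (if U = ∅ then 1 else 0) := by
  have hU : U.card ≤ p := by simpa using card_le_univ U
  have hsum : ∑ j, (if j ∈ U then shapleyCoeff p (U.card - 1) else -shapleyCoeff p U.card) =
      U.card * shapleyCoeff p (U.card - 1) - ((p : ℝ) - U.card) * shapleyCoeff p U.card := by
    rw [sum_ite, sum_const, sum_const, filter_mem_eq_inter, univ_inter, filter_not,
      filter_mem_eq_inter, univ_inter, card_univ_sdiff, Fintype.card_fin, nsmul_eq_mul,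
      nsmul_eq_mul, Nat.cast_sub hU]
    ring
  have hp' : (p : ℝ) ≠ 0 := by exact_mod_cast hp
  have : NeZero p := ⟨hp⟩
  rw [hsum]
  rcases U.eq_empty_or_nonempty with rfl | hU₀
  · have := choose_mul_shapleyCoeff (p := p) (k := 0) (by omega)
    simp only [Nat.choose_zero_right, Nat.cast_one, one_mul] at this
    simp [this, hp', univ_nonempty.ne_empty.symm]
  by_cases hUu : U = univ
  · subst hUu
    have := choose_mul_shapleyCoeff (p := p) (k := p - 1) (by omega)
    simp only [Nat.choose_self, Nat.cast_one, one_mul] at this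
    simp [this, hp', univ_nonempty.ne_empty]
  · obtain ⟨k, hk⟩ : ∃ k, U.card = k + 1 := ⟨U.card - 1, by grind [hU₀.card_pos]⟩
    have hkp : k + 1 < p := by
      have := card_lt_card (ssubset_univ_iff.mpr hUu)
      simp only [card_univ, Fintype.card_fin, hk] at this
      omega
    rw [if_neg hUu, if_neg hU₀.ne_empty, hk, Nat.add_sub_cancel, Nat.cast_succ,
      add_one_mul_shapleyCoeff hkp]
    ring

theorem sum_shapleyValue {p : ℕ} (hp : p ≠ 0) (v : Finset (Fin p) → ℝ) :
    ∑ j, shapleyValue v j = v univ - v ∅ := by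
  simp_rw [shapleyValue_eq_sum_ite]
  rw [sum_comm]
  simp_rw [← sum_mul, sum_ite_mem_shapleyCoeff hp, sub_mul, sum_sub_distrib, ite_mul, one_mul,
    zero_mul, sum_ite_eq', mem_univ, if_true]

theorem sum_powerset_erase_erase_shapleyCoeff {p : ℕ} {j k : Fin p} (hjk : j ≠ k) :
    ∑ S ∈ ((univ.erase j).erase k).powerset,
      (shapleyCoeff p S.card + shapleyCoeff p (S.card + 1)) = 1 := by
  have hkE : k ∉ (univ.erase j).erase k := notMem_erase k _
  have hcard : (insert k ((univ.erase j).erase k)).card + 1 = p := by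
    rw [insert_erase (mem_erase.mpr ⟨hjk.symm, mem_univ k⟩), card_erase_of_mem (mem_univ j),
      card_univ, Fintype.card_fin]
    omega
  rw [← sum_powerset_shapleyCoeff hcard, sum_powerset_insert hkE, ← sum_add_distrib]
  refine sum_congr rfl fun S hS => ?_
  rw [card_insert_of_notMem fun h => hkE (mem_powerset.mp hS h)]

theorem shapleyLoss_eq_sum {p : ℕ} (v : Finset (Fin p) → ℝ) (β : Fin p → ℝ) :
    shapleyLoss v β = ∑ U, shapleyWeight p U * (v U - ∑ j ∈ U, β j) ^ 2 := by
  rw [shapleyLoss, powerset_univ]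
  refine sum_subset (filter_subset _ _) fun U _ hU => ?_
  obtain rfl | rfl : U = ∅ ∨ U = univ := by
    simp only [mem_filter, mem_univ, true_and] at hU
    tauto
  · rw [shapleyWeight_empty, zero_mul]
  · rw [shapleyWeight_univ, zero_mul]

/-- `-½ ∂ℓ*/∂β_j`. -/
noncomputable def shapleyResidual {p : ℕ} (v : Finset (Fin p) → ℝ) (β : Fin p → ℝ)
    (j : Fin p) : ℝ :=
  ∑ U with j ∈ U, shapleyWeight p U * (v U - ∑ i ∈ U, β i)

noncomputable def shapleyQuadForm {p : ℕ} (δ : Fin p → ℝ) : ℝ :=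
  ∑ U, shapleyWeight p U * (∑ i ∈ U, δ i) ^ 2

theorem shapleyLoss_add {p : ℕ} (v : Finset (Fin p) → ℝ) (β δ : Fin p → ℝ) :
    shapleyLoss v (β + δ) =
      shapleyLoss v β - 2 * ∑ j, δ j * shapleyResidual v β j + shapleyQuadForm δ := by
  have hcross : ∑ U, shapleyWeight p U * (v U - ∑ i ∈ U, β i) * ∑ i ∈ U, δ i =
      ∑ j, δ j * shapleyResidual v β j := by
    simp_rw [shapleyResidual, mul_sum, mul_comm (δ _)]
    exact sum_comm' (by simp)
  rw [shapleyLoss_eq_sum, shapleyLoss_eq_sum, shapleyQuadForm, ← hcross, mul_sum,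
    ← sum_sub_distrib, ← sum_add_distrib]
  refine sum_congr rfl fun U _ => ?_
  simp only [Pi.add_apply, sum_add_distrib]
  ring

theorem shapleyResidual_shapleyValue_eq {p : ℕ} (v : Finset (Fin p) → ℝ) (j k : Fin p) :
    shapleyResidual v (shapleyValue v) j = shapleyResidual v (shapleyValue v) k := by
  rcases eq_or_ne j k with rfl | hjk
  · rfl
  set φ := shapleyValue v
  set E := (univ.erase j).erase k
  have hE : ∀ S ∈ E.powerset, j ∉ S ∧ k ∉ S ∧ S.card + 1 < p := fun S hS => by
    obtain ⟨hjS, hkS⟩ := mem_powerset_erase_erase.mp hS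
    have := card_le_univ (insert j (insert k S))
    rw [card_insert_of_notMem (by simp [hjk, hjS]), card_insert_of_notMem hkS,
      Fintype.card_fin] at this
    exact ⟨hjS, hkS, by omega⟩
  rw [← sub_eq_zero, shapleyResidual, shapleyResidual, sum_filter_mem_eq_sum_powerset_erase,
    sum_filter_mem_eq_sum_powerset_erase,
    sum_powerset_erase_sub_sum_powerset_erase (fun j T => shapleyWeight p (insert j T) *
      (v (insert j T) - ∑ i ∈ insert j T, φ i)) hjk]
  calc _ = ∑ S ∈ E.powerset, ((p : ℝ) - 1) / p *
          ((shapleyCoeff p S.card + shapleyCoeff p (S.card + 1)) *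
              (v (insert j S) - v (insert k S)) -
            (shapleyCoeff p S.card + shapleyCoeff p (S.card + 1)) * (φ j - φ k)) := by
        refine sum_congr rfl fun S hS => ?_
        obtain ⟨hjS, hkS, hSp⟩ := hE S hS
        rw [insert_comm, shapleyWeight_eq_shapleyCoeff (card_insert_of_notMem hjS) hSp,
          shapleyWeight_eq_shapleyCoeff (card_insert_of_notMem hkS) hSp, sum_insert hjS,
          sum_insert hkS]
        ring
    _ = 0 := by
      rw [← mul_sum, sum_sub_distrib, ← sum_mul, sum_powerset_erase_erase_shapleyCoeff hjk,
        ← shapleyValue_sub_shapleyValue v hjk]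
      ring

theorem shapleyLoss_shapleyValue_add {p : ℕ} (v : Finset (Fin p) → ℝ) {δ : Fin p → ℝ}
    (hδ : ∑ j, δ j = 0) :
    shapleyLoss v (shapleyValue v + δ) = shapleyLoss v (shapleyValue v) + shapleyQuadForm δ := by
  have hlin : ∑ j, δ j * shapleyResidual v (shapleyValue v) j = 0 := by
    rcases isEmpty_or_nonempty (Fin p) with _ | ⟨⟨j₀⟩⟩
    · simp
    · simp_rw [shapleyResidual_shapleyValue_eq v _ j₀]
      rw [← sum_mul, hδ, zero_mul]
  rw [shapleyLoss_add, hlin]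
  ring

theorem shapleyQuadForm_nonneg {p : ℕ} (δ : Fin p → ℝ) : 0 ≤ shapleyQuadForm δ :=
  sum_nonneg fun U _ => mul_nonneg (shapleyWeight_nonneg U) (sq_nonneg _)

theorem eq_zero_of_shapleyQuadForm_eq_zero {p : ℕ} (hp : 2 ≤ p) {δ : Fin p → ℝ}
    (h : shapleyQuadForm δ = 0) : δ = 0 := by
  funext j
  have hterm := (sum_eq_zero_iff_of_nonneg fun U _ =>
    mul_nonneg (shapleyWeight_nonneg U) (sq_nonneg _)).mp h {j} (mem_univ _)
  have hw : 0 < shapleyWeight p {j} := shapleyWeight_pos (singleton_nonempty j) fun h => by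
    have := congrArg card h
    simp only [card_singleton, card_univ, Fintype.card_fin] at this
    omega
  rw [sum_singleton] at hterm
  exact pow_eq_zero_iff two_ne_zero |>.mp ((mul_eq_zero.mp hterm).resolve_left hw.ne')

/-- Over the constraint set `{β : Σ_j β_j = v({1,…,p})}`, the weighted least-squares cost
`ℓ*` admits the vector of Shapley values as a minimizer, and this minimizer is unique. -/
theorem shapley_unique_minimizer (p : ℕ) (hp : 2 ≤ p)
    (v : Finset (Fin p) → ℝ) (hv : v ∅ = 0) :
    (∑ j : Fin p, shapleyValue v j = v Finset.univ) ∧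
    (∀ β : Fin p → ℝ, (∑ j : Fin p, β j = v Finset.univ) →
      shapleyLoss v (shapleyValue v) ≤ shapleyLoss v β) ∧
    (∀ β : Fin p → ℝ, (∑ j : Fin p, β j = v Finset.univ) →
      shapleyLoss v β = shapleyLoss v (shapleyValue v) → β = shapleyValue v) := by
  have hφ : ∑ j, shapleyValue v j = v univ := by rw [sum_shapleyValue (by omega), hv, sub_zero]
  have hloss : ∀ β : Fin p → ℝ, ∑ j, β j = v univ →
      shapleyLoss v β =
        shapleyLoss v (shapleyValue v) + shapleyQuadForm (β - shapleyValue v) := by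
    intro β hβ
    have hδ : ∑ j, (β - shapleyValue v) j = 0 := by
      simp only [Pi.sub_apply, sum_sub_distrib, hβ, hφ, sub_self]
    simpa using shapleyLoss_shapleyValue_add v hδ
  refine ⟨hφ, fun β hβ => ?_, fun β hβ hmin => ?_⟩
  · rw [hloss β hβ]
    exact le_add_of_nonneg_right (shapleyQuadForm_nonneg _)
  · rw [hloss β hβ, add_eq_left] at hmin
    exact sub_eq_zero.mp (eq_zero_of_shapleyQuadForm_eq_zero hp hmin)
end

section
/- Let (f_n) be a sequence of convex functions from ℝ^p to ℝ converging pointwise to a function f : ℝ^p → ℝ. Then f is convex and the convergence is uniform on every compact subset K of ℝ^p, i.e., sup_{x∈K} |f_n(x) − f(x)| → 0 as n → ∞. -/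
/-!
Passing to the limit in the defining inequality shows that the limit is convex. For uniformity,
put a simplex around a point: each `f n` is bounded above on it by its values at the finitely many
vertices, hence uniformly in `n`, and reflecting through the point turns this into a uniform
two-sided bound on a ball. A convex function bounded by `M` on a ball is Lipschitz on a smaller
ball with a constant depending only on `M`, so the family is equicontinuous, and for an
equicontinuous family pointwise convergence is uniform on compact sets.
-/

open Set Filter Topology Metric

theorem convexOn_of_tendsto {E ι : Type*} [AddCommGroup E] [Module ℝ E] {l : Filter ι} [l.NeBot]
    {F : ι → E → ℝ} {g : E → ℝ} {s : Set E} (hF : ∀ i, ConvexOn ℝ s (F i))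
    (hg : ∀ x ∈ s, Tendsto (F · x) l (𝓝 (g x))) : ConvexOn ℝ s g := by
  obtain ⟨i₀⟩ := l.nonempty_of_neBot
  refine ⟨(hF i₀).1, fun x hx y hy a b ha hb hab => ?_⟩
  exact le_of_tendsto_of_tendsto (hg _ ((hF i₀).1 hx hy ha hb hab))
    (((hg x hx).const_mul a).add ((hg y hy).const_mul b))
    (.of_forall fun i => (hF i).2 hx hy ha hb hab)

theorem EquicontinuousOn.tendstoUniformlyOn_of_tendsto {ι X α : Type*} [TopologicalSpace X]
    [UniformSpace α] {F : ι → X → α} {f : X → α} {l : Filter ι} {K : Set X}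
    (hF : EquicontinuousOn F K) (hK : IsCompact K) (h : ∀ x ∈ K, Tendsto (F · x) l (𝓝 (f x))) :
    TendstoUniformlyOn F f l K := by
  have hpi : Tendsto ((⋃₀ {K}).domRestrict ∘ F) l (𝓝 ((⋃₀ {K}).domRestrict f)) :=
    tendsto_pi_nhds.2 fun x => h x (by simpa using x.2)
  have huniform := (EquicontinuousOn.tendsto_uniformOnFun_iff_pi' (𝔖 := {K})
    (by simpa using hK) (by simpa using hF) l f).2 hpi
  simpa [Function.comp_def] using UniformOnFun.tendsto_iff_tendstoUniformlyOn.1 huniform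

section

variable {E ι : Type*} [NormedAddCommGroup E] [NormedSpace ℝ E] {F : ι → E → ℝ} {C : Set E}
  {x₀ : E}

theorem ConvexOn.two_mul_le_add {f : E → ℝ} (hf : ConvexOn ℝ C f) {x h : E} (h₁ : x + h ∈ C)
    (h₂ : x - h ∈ C) : 2 * f x ≤ f (x + h) + f (x - h) := by
  have hjensen :=
    hf.2 h₁ h₂ (by norm_num : (0 : ℝ) ≤ 1 / 2) (by norm_num : (0 : ℝ) ≤ 1 / 2) (by norm_num)
  have hmid : (1 / 2 : ℝ) • (x + h) + (1 / 2 : ℝ) • (x - h) = x := by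
    rw [← smul_add, add_add_sub_cancel, ← two_smul ℝ x, smul_smul]; norm_num
  rw [hmid, smul_eq_mul, smul_eq_mul] at hjensen
  linarith

theorem exists_mem_nhds_forall_le_of_convexOn [FiniteDimensional ℝ E] (hC : C ∈ 𝓝 x₀)
    (hF : ∀ i, ConvexOn ℝ C (F i)) (hb : ∀ x ∈ C, BddAbove (range fun i => F i x)) :
    ∃ U ∈ 𝓝 x₀, ∃ M, ∀ i, ∀ x ∈ U, F i x ≤ M := by
  obtain ⟨b, hx₀, hbC⟩ := exists_mem_interior_convexHull_affineBasis hC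
  have hbC' : range b ⊆ C := (subset_convexHull ℝ _).trans hbC
  obtain ⟨M, hM⟩ : BddAbove (⋃ v ∈ range b, range fun i => F i v) :=
    (finite_range b).bddAbove_biUnion.2 fun v hv => hb v (hbC' hv)
  refine ⟨_, mem_interior_iff_mem_nhds.1 hx₀, M, fun i x hx => ?_⟩
  obtain ⟨v, hv, hle⟩ := (hF i).exists_ge_of_mem_convexHull hbC' hx
  exact hle.trans (hM (mem_biUnion hv ⟨i, rfl⟩))

theorem exists_ball_forall_abs_le_of_convexOn [FiniteDimensional ℝ E] (hC : C ∈ 𝓝 x₀)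
    (hF : ∀ i, ConvexOn ℝ C (F i)) (hb : ∀ x ∈ C, BddAbove (range fun i => |F i x|)) :
    ∃ r > 0, ball x₀ r ⊆ C ∧ ∃ M, ∀ i, ∀ x ∈ ball x₀ r, |F i x| ≤ M := by
  have hb' : ∀ x ∈ C, BddAbove (range fun i => F i x) := fun x hx => by
    obtain ⟨B, hB⟩ := hb x hx
    exact ⟨B, forall_mem_range.2 fun i => (le_abs_self _).trans (hB ⟨i, rfl⟩)⟩
  obtain ⟨U, hU, M, hM⟩ := exists_mem_nhds_forall_le_of_convexOn hC hF hb'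
  obtain ⟨B, hB⟩ := hb x₀ (mem_of_mem_nhds hC)
  have hreflect : Tendsto (fun x => x₀ - (x - x₀)) (𝓝 x₀) (𝓝 x₀) :=
    (by fun_prop : Continuous fun x : E => x₀ - (x - x₀)).tendsto' x₀ x₀ (by simp)
  have hW : {x | x ∈ U ∩ C ∧ x₀ - (x - x₀) ∈ U ∩ C} ∈ 𝓝 x₀ :=
    inter_mem (inter_mem hU hC) (hreflect (inter_mem hU hC))
  obtain ⟨r, hr, hrW⟩ := Metric.mem_nhds_iff.1 hW
  refine ⟨r, hr, fun x hx => (hrW hx).1.2, M + 2 * B, fun i x hx => abs_le.2 ⟨?_, ?_⟩⟩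
  · have hmid := (hF i).two_mul_le_add (h := x - x₀) (by rw [add_sub_cancel]; exact (hrW hx).1.2)
      (hrW hx).2.2
    rw [add_sub_cancel] at hmid
    have hreflected := hM i _ (hrW hx).2.1
    have hcentre := (abs_le.1 (hB ⟨i, rfl⟩)).1
    linarith
  · have hupper := hM i x (hrW hx).1.1
    have hB_nonneg := (abs_nonneg _).trans (hB ⟨i, rfl⟩)
    linarith

theorem equicontinuousAt_of_convexOn [FiniteDimensional ℝ E] (hC : C ∈ 𝓝 x₀)
    (hF : ∀ i, ConvexOn ℝ C (F i)) (hb : ∀ x ∈ C, BddAbove (range fun i => |F i x|)) :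
    EquicontinuousAt F x₀ := by
  obtain ⟨r, hr, hrC, M, hM⟩ := exists_ball_forall_abs_le_of_convexOn hC hF hb
  have hlip (i : ι) : LipschitzOnWith (2 * M / (r / 2)).toNNReal (F i) (ball x₀ (r - r / 2)) :=
    ((hF i).subset hrC (convex_ball x₀ r)).lipschitzOnWith_of_abs_le (half_pos hr)
      fun a ha => hM i a ha
  have hball : ball x₀ (r - r / 2) ∈ 𝓝 x₀ := ball_mem_nhds x₀ (by linarith)
  have hwithin := (LipschitzOnWith.uniformEquicontinuousOn F _ hlip).equicontinuousOn x₀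
    (mem_of_mem_nhds hball)
  exact fun U hU => nhdsWithin_eq_nhds.2 hball ▸ hwithin U hU

end

/-- If a sequence of convex functions `ℝ^p → ℝ` converges pointwise to `f`, then `f` is
convex and the convergence is uniform on every compact subset of `ℝ^p`. -/
theorem convex_pointwise_to_uniform_on_compacts (p : ℕ)
    (f : ℕ → (Fin p → ℝ) → ℝ) (g : (Fin p → ℝ) → ℝ)
    (hconv : ∀ n, ConvexOn ℝ Set.univ (f n))
    (hpt : ∀ x, Filter.Tendsto (fun n => f n x) Filter.atTop (nhds (g x))) :
    ConvexOn ℝ Set.univ g ∧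
    ∀ K : Set (Fin p → ℝ), IsCompact K →
      TendstoUniformlyOn f g Filter.atTop K := by
  refine ⟨convexOn_of_tendsto hconv fun x _ => hpt x, fun K hK => ?_⟩
  have hequi : Equicontinuous f := fun x =>
    equicontinuousAt_of_convexOn univ_mem hconv fun y _ => (hpt y).abs.bddAbove_range
  exact (hequi.equicontinuousOn K).tendstoUniformlyOn_of_tendsto hK fun x _ => hpt x
end

section
/- Let X = (X^{(1)},…,X^{(p)}) be a random vector and Y a square-integrable real random variable with Var[Y] > 0. Then for every j ∈ {1,…,p}, the Shapley effect satisfies 0 ≤ Sh*(X^{(j)}) ≤ 1. -/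
/-!
By the law of total variance and the tower property, `U ↦ Var[E[Y | X^{(U)}]]` is monotone and
bounded by `Var[Y]`, so every marginal contribution lies in `[0, Var[Y]]`. Since
`Σ_{U ⊆ s} C(|s|,|U|)⁻¹ = |s| + 1`, the Shapley weights sum to one, so `Sh*(X^{(j)})` is a convex
combination of numbers in `[0,1]`.
-/

open MeasureTheory ProbabilityTheory

/-- The σ-algebra generated by the subvector `X^{(U)} = (X^{(j)})_{j∈U}` of `X`. -/
def subSigma {Ω : Type*} [MeasurableSpace Ω] {p : ℕ} (X : Ω → Fin p → ℝ)
    (U : Finset (Fin p)) : MeasurableSpace Ω :=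
  MeasurableSpace.comap (fun ω => fun j : U => X ω j) inferInstance

/-- The Shapley effect of the `j`-th input variable:
`Sh*(X^{(j)}) = Σ_{U ⊆ {1,…,p}\{j}} (1/p) · C(p−1,|U|)⁻¹ ·
  (Var[E[Y | X^{(U∪{j})}]] − Var[E[Y | X^{(U)}]]) / Var[Y]`. -/
noncomputable def shapleyEffect {Ω : Type*} [MeasurableSpace Ω] (μ : Measure Ω)
    {p : ℕ} (X : Ω → Fin p → ℝ) (Y : Ω → ℝ) (j : Fin p) : ℝ :=
  ∑ U ∈ (Finset.univ.erase j).powerset,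
    (1 / p : ℝ) * ((p - 1).choose U.card : ℝ)⁻¹ *
      ((variance (μ[Y | subSigma X (insert j U)]) μ
        - variance (μ[Y | subSigma X U]) μ) / variance Y μ)

theorem Finset.sum_powerset_inv_choose_card {α K : Type*} [Semifield K] [CharZero K]
    (s : Finset α) : ∑ t ∈ s.powerset, (s.card.choose t.card : K)⁻¹ = s.card + 1 := by
  rw [Finset.sum_powerset_apply_card (fun k => (s.card.choose k : K)⁻¹)]
  have hterm : ∀ k ∈ Finset.range (s.card + 1),
      s.card.choose k • (s.card.choose k : K)⁻¹ = 1 := by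
    intro k hk
    have hpos : (s.card.choose k : K) ≠ 0 :=
      Nat.cast_ne_zero.2 (Nat.choose_pos (Nat.lt_succ_iff.1 (Finset.mem_range.1 hk))).ne'
    rw [nsmul_eq_mul, mul_inv_cancel₀ hpos]
  rw [Finset.sum_congr rfl hterm]
  simp

namespace ProbabilityTheory

variable {Ω : Type*} {m m₁ m₂ m₀ : MeasurableSpace Ω} {μ : Measure Ω} [IsProbabilityMeasure μ]
  {X : Ω → ℝ}

lemma variance_condExp_le (hm : m ≤ m₀) (hX : MemLp X 2 μ) : Var[μ[X | m]; μ] ≤ Var[X; μ] := by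
  have hcondVar : 0 ≤ μ[Var[X; μ | m]] :=
    integral_nonneg_of_ae (condExp_nonneg (ae_of_all _ fun ω => sq_nonneg _))
  linarith [integral_condVar_add_variance_condExp hm hX]

lemma variance_condExp_mono (h₁₂ : m₁ ≤ m₂) (h₂ : m₂ ≤ m₀) (hX : MemLp X 2 μ) :
    Var[μ[X | m₁]; μ] ≤ Var[μ[X | m₂]; μ] := by
  rw [← variance_congr (condExp_condExp_of_le h₁₂ h₂)]
  exact variance_condExp_le (h₁₂.trans h₂) (hX.condExp one_le_two)

lemma variance_condExp_sub_div_mem_Icc (h₁₂ : m₁ ≤ m₂) (h₂ : m₂ ≤ m₀) (hX : MemLp X 2 μ) :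
    (Var[μ[X | m₂]; μ] - Var[μ[X | m₁]; μ]) / Var[X; μ] ∈ Set.Icc 0 1 := by
  have hmono := variance_condExp_mono h₁₂ h₂ hX
  have hle := variance_condExp_le h₂ hX
  refine ⟨div_nonneg (sub_nonneg.2 hmono) (variance_nonneg _ _),
    div_le_one_of_le₀ ?_ (variance_nonneg _ _)⟩
  linarith [variance_nonneg (μ[X | m₁]) μ]

end ProbabilityTheory

section SubSigma

variable {Ω : Type*} [MeasurableSpace Ω] {p : ℕ}

lemma subSigma_le {X : Ω → Fin p → ℝ} (hX : Measurable X) (U : Finset (Fin p)) :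
    subSigma X U ≤ ‹MeasurableSpace Ω› :=
  Measurable.comap_le (measurable_pi_lambda _ fun _ => hX.eval)

lemma subSigma_mono (X : Ω → Fin p → ℝ) {U V : Finset (Fin p)} (h : U ⊆ V) :
    subSigma X U ≤ subSigma X V :=
  measurable_iff_comap_le.1 <| @measurable_pi_lambda _ _ _ (subSigma X V) _ _ fun j =>
    (measurable_pi_apply (⟨j, h j.2⟩ : V)).comp (comap_measurable fun ω (i : V) => X ω i)

end SubSigma

theorem shapleyEffect_mem_Icc_general {Ω : Type*} [MeasurableSpace Ω]
    (μ : Measure Ω) [IsProbabilityMeasure μ] (p : ℕ)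
    (X : Ω → Fin p → ℝ) (hX : Measurable X)
    (Y : Ω → ℝ) (hY : MemLp Y 2 μ)
    (j : Fin p) :
    0 ≤ shapleyEffect μ X Y j ∧ shapleyEffect μ X Y j ≤ 1 := by
  have hcard : (Finset.univ.erase j).card = p - 1 := by simp
  have hweights : ∑ U ∈ (Finset.univ.erase j).powerset,
      (1 / p : ℝ) * ((p - 1).choose U.card : ℝ)⁻¹ = 1 := by
    rw [← Finset.mul_sum, ← hcard, Finset.sum_powerset_inv_choose_card, hcard,
      Nat.cast_sub j.pos, Nat.cast_one, sub_add_cancel, one_div, inv_mul_cancel₀]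
    exact_mod_cast j.pos.ne'
  exact (convex_Icc (0 : ℝ) 1).sum_mem (fun U _ => by positivity) hweights fun U _ =>
    variance_condExp_sub_div_mem_Icc (subSigma_mono X (Finset.subset_insert j U))
      (subSigma_le hX _) hY

/-- Shapley effects lie in `[0,1]`. -/
theorem shapleyEffect_mem_Icc {Ω : Type*} [MeasurableSpace Ω]
    (μ : Measure Ω) [IsProbabilityMeasure μ] (p : ℕ)
    (X : Ω → Fin p → ℝ) (hX : Measurable X)
    (Y : Ω → ℝ) (hY : MemLp Y 2 μ) (hVarY : 0 < variance Y μ)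
    (j : Fin p) :
    0 ≤ shapleyEffect μ X Y j ∧ shapleyEffect μ X Y j ≤ 1 :=
  shapleyEffect_mem_Icc_general μ p X hX Y hY j
end

section
/- Let X = (X^{(1)},…,X^{(p)}) be a random vector and Y a square-integrable real random variable with Var[Y] > 0. If two coordinates are almost-surely equal, X^{(j)} = X^{(k)} a.s. with j ≠ k, then their Shapley effects coincide: Sh*(X^{(j)}) = Sh*(X^{(k)}). -/
/-!
The transposition `σ` of `j` and `k` is a bijection between the subsets `U ∌ j` and `U ∌ k`
preserving cardinalities, and it maps `insert j U` to `insert k (σ U)`. Because `X^{(j)} = X^{(k)}`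
a.s., the subvectors `X^{(U)}` and `X^{(σ U)}` are a.s. measurable functions of each other, so they
generate the same σ-algebra up to null sets and give a.s. equal conditional expectations, hence
equal variances: the two Shapley sums agree term by term.
-/

open MeasureTheory ProbabilityTheory

namespace MeasureTheory

variable {Ω D E : Type*} {m₀ : MeasurableSpace Ω} [MeasurableSpace D] [MeasurableSpace E]
  {μ : Measure Ω} {φ : Ω → D} {ψ : Ω → E}

theorem condExp_ae_eq_condExp_of_le {m₁ m₂ : MeasurableSpace Ω} {Y : Ω → ℝ}
    (hm₁₂ : m₁ ≤ m₂) (hm₂ : m₂ ≤ m₀) [SigmaFinite (μ.trim hm₂)]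
    [SigmaFinite (μ.trim (hm₁₂.trans hm₂))]
    (h : AEStronglyMeasurable[m₁] (μ[Y | m₂]) μ) :
    μ[Y | m₁] =ᵐ[μ] μ[Y | m₂] :=
  (condExp_condExp_of_le hm₁₂ hm₂).symm.trans
    (condExp_of_aestronglyMeasurable' (hm₁₂.trans hm₂) h integrable_condExp)

theorem aestronglyMeasurable_comap_of_ae_eq_comp {ρ : D → E} (hρ : Measurable ρ) (hψ : ψ =ᵐ[μ] ρ ∘ φ) {g : Ω → ℝ}
    (hg : StronglyMeasurable[.comap φ inferInstance ⊔ .comap ψ inferInstance] g) :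
    AEStronglyMeasurable[.comap φ inferInstance] g μ := by
  rw [← MeasurableSpace.comap_prodMk] at hg
  obtain ⟨h, hh, rfl⟩ := hg.exists_eq_measurable_comp
  refine ⟨fun ω => h (φ ω, ρ (φ ω)), ?_, ?_⟩
  · exact hh.comp_measurable ((measurable_id.prodMk hρ).comp (comap_measurable φ))
  · filter_upwards [hψ] with ω hω
    simp [hω]

theorem condExp_comap_ae_eq_condExp_comap_sup [IsFiniteMeasure μ] (hφ : Measurable φ) (hψ : Measurable ψ)
    {ρ : D → E} (hρ : Measurable ρ) (hψφ : ψ =ᵐ[μ] ρ ∘ φ) (Y : Ω → ℝ) :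
    μ[Y | .comap φ inferInstance] =ᵐ[μ] μ[Y | .comap φ inferInstance ⊔ .comap ψ inferInstance] :=
  condExp_ae_eq_condExp_of_le le_sup_left (sup_le hφ.comap_le hψ.comap_le)
    (aestronglyMeasurable_comap_of_ae_eq_comp hρ hψφ stronglyMeasurable_condExp)

theorem condExp_comap_ae_eq_of_ae_eq_comp [IsFiniteMeasure μ] (hφ : Measurable φ) (hψ : Measurable ψ)
    {ρ : D → E} {ρ' : E → D} (hρ : Measurable ρ) (hρ' : Measurable ρ')
    (hψφ : ψ =ᵐ[μ] ρ ∘ φ) (hφψ : φ =ᵐ[μ] ρ' ∘ ψ) (Y : Ω → ℝ) :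
    μ[Y | .comap φ inferInstance] =ᵐ[μ] μ[Y | .comap ψ inferInstance] := by
  refine (condExp_comap_ae_eq_condExp_comap_sup hφ hψ hρ hψφ Y).trans ?_
  rw [sup_comm]
  exact (condExp_comap_ae_eq_condExp_comap_sup hψ hφ hρ' hφψ Y).symm

end MeasureTheory

theorem measurable_subvector {Ω : Type*} [MeasurableSpace Ω] {p : ℕ} {X : Ω → Fin p → ℝ}
    (hX : Measurable X) (V : Finset (Fin p)) : Measurable fun ω (i : V) => X ω i :=
  measurable_pi_lambda _ fun i => (measurable_pi_apply (i : Fin p)).comp hX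

theorem condExp_subSigma_map_ae_eq {Ω : Type*} [MeasurableSpace Ω] {μ : Measure Ω}
    [IsFiniteMeasure μ] {p : ℕ} {X : Ω → Fin p → ℝ} (hX : Measurable X) (Y : Ω → ℝ)
    {σ : Equiv.Perm (Fin p)} (hσ : ∀ᵐ ω ∂μ, ∀ i, X ω (σ i) = X ω i) (V : Finset (Fin p)) :
    μ[Y | subSigma X V] =ᵐ[μ] μ[Y | subSigma X (V.map σ.toEmbedding)] := by
  refine condExp_comap_ae_eq_of_ae_eq_comp (measurable_subvector hX V)
    (measurable_subvector hX _)
    (ρ := fun v i => v ⟨σ.symm i, Finset.mem_map_equiv.1 i.2⟩)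
    (ρ' := fun v i => v ⟨σ i, Finset.mem_map_equiv.2 (by simp)⟩)
    (measurable_pi_lambda _ fun _ => measurable_pi_apply _)
    (measurable_pi_lambda _ fun _ => measurable_pi_apply _) ?_ ?_ Y
  · filter_upwards [hσ] with ω hω
    funext i
    simpa using hω (σ.symm i)
  · filter_upwards [hσ] with ω hω
    funext i
    exact (hω i).symm

theorem shapleyEffect_symm_general {Ω : Type*} [MeasurableSpace Ω]
    (μ : Measure Ω) [IsProbabilityMeasure μ] (p : ℕ)
    (X : Ω → Fin p → ℝ) (hX : Measurable X)
    (Y : Ω → ℝ)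
    (j k : Fin p)
    (heq : ∀ᵐ ω ∂μ, X ω j = X ω k) :
    shapleyEffect μ X Y j = shapleyEffect μ X Y k := by
  set σ := Equiv.swap j k
  have hσ : ∀ᵐ ω ∂μ, ∀ i, X ω (σ i) = X ω i := by
    filter_upwards [heq] with ω hω
    exact Equiv.apply_swap_eq_self hω
  have hσj : σ.toEmbedding j = k := Equiv.swap_apply_left j k
  refine Finset.sum_equiv σ.finsetCongr (fun U => ?_) (fun U _ => ?_)
  · simp [Finset.subset_erase, Finset.mem_map_equiv, σ, Equiv.symm_swap]
  · rw [Equiv.finsetCongr_apply, Finset.card_map, ← hσj, ← Finset.map_insert,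
      variance_congr (condExp_subSigma_map_ae_eq hX Y hσ (insert j U)),
      variance_congr (condExp_subSigma_map_ae_eq hX Y hσ U)]

/-- Symmetry of Shapley effects: if two coordinates are almost surely equal,
their Shapley effects coincide. -/
theorem shapleyEffect_symm {Ω : Type*} [MeasurableSpace Ω]
    (μ : Measure Ω) [IsProbabilityMeasure μ] (p : ℕ)
    (X : Ω → Fin p → ℝ) (hX : Measurable X)
    (Y : Ω → ℝ) (hY : MemLp Y 2 μ) (hVarY : 0 < variance Y μ)
    (j k : Fin p) (hjk : j ≠ k)
    (heq : ∀ᵐ ω ∂μ, X ω j = X ω k) :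
    shapleyEffect μ X Y j = shapleyEffect μ X Y k :=
  shapleyEffect_symm_general μ p X hX Y j k heq
end
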